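/- Let m ≥ 2 and n be positive integers and let 0 ≤ k ≤ m − 1. Define the m-linear form T : ℓ_m^n × ⋯ × ℓ_m^n → 𝕂 by T(x^{(1)}, …, x^{(m)}) = x_1^{(1)} ⋯ x_1^{(k)} · Σ_{j=1}^n x_j^{(k+1)} ⋯ x_j^{(m)} (the first k arguments contribute their first coordinate, the remaining m − k arguments are summed along the diagonal). Then ‖T‖ = n^{k/m}. In particular, the diagonal form Σ_{j=1}^n x_j^{(1)} ⋯ x_j^{(m)} has norm 1. -/

import Mathlib

open scoped ENNReal
open Finset

/-!
Evaluating `T` at `x^{(i)} = e_1` for `i ≤ k` and `x^{(i)} = (1, …, 1)` otherwise gives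
`n ≤ ‖T‖ n^{(m-k)/m}`. Conversely `|x_1^{(i)}| ≤ ‖x^{(i)}‖_m`, and for the `r = m - k` diagonal
arguments, normalised to norm one, AM-GM gives `Σ_j (∏_i |x_j^{(i)}|)^{m/r} ≤ 1`, whence the
power-mean inequality gives `Σ_j ∏_i |x_j^{(i)}| ≤ n^{1 - r/m}`.
-/

section Holder

variable {ι κ : Type*} [Fintype κ] {s : Finset ι} {f : ι → κ → ℝ}

theorem sum_prod_rpow_div_card_le_one (p : ℝ) (hs : 0 < #s) (hf : ∀ i ∈ s, ∀ j, 0 ≤ f i j)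
    (hf1 : ∀ i ∈ s, ∑ j, f i j ^ p = 1) :
    ∑ j, (∏ i ∈ s, f i j) ^ (p / #s) ≤ 1 := by
  have hs' : (0 : ℝ) < #s := by exact_mod_cast hs
  have hw : ∑ _i ∈ s, (#s : ℝ)⁻¹ = 1 := by
    rw [sum_const, nsmul_eq_mul, mul_inv_cancel₀ hs'.ne']
  calc ∑ j, (∏ i ∈ s, f i j) ^ (p / #s)
      = ∑ j, ∏ i ∈ s, (f i j ^ p) ^ (#s : ℝ)⁻¹ := by
        refine sum_congr rfl fun j _ => ?_
        rw [← Real.finsetProd_rpow s _ (fun i hi => hf i hi j)]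
        exact prod_congr rfl fun i hi => by rw [← Real.rpow_mul (hf i hi j), div_eq_mul_inv]
    _ ≤ ∑ j, ∑ i ∈ s, (#s : ℝ)⁻¹ * f i j ^ p := by
        gcongr with j
        exact Real.geom_mean_le_arith_mean_weighted s _ _ (fun _ _ => by positivity) hw
          (fun i hi => Real.rpow_nonneg (hf i hi j) p)
    _ = 1 := by
        rw [sum_comm, ← hw]
        exact sum_congr rfl fun i hi => by rw [← mul_sum, hf1 i hi, mul_one]

theorem sum_prod_le_card_rpow_of_sum_rpow_eq_one {p : ℝ} (hs : 0 < #s) (hsp : #s ≤ p)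
    (hf : ∀ i ∈ s, ∀ j, 0 ≤ f i j) (hf1 : ∀ i ∈ s, ∑ j, f i j ^ p = 1) :
    ∑ j, ∏ i ∈ s, f i j ≤ (Fintype.card κ : ℝ) ^ (1 - #s / p) := by
  have hs' : (0 : ℝ) < #s := by exact_mod_cast hs
  have hq : 1 ≤ p / #s := (one_le_div hs').2 hsp
  have hg : ∀ j, 0 ≤ ∏ i ∈ s, f i j := fun j => prod_nonneg fun i hi => hf i hi j
  have holder :=
    Real.inner_le_weight_mul_Lp_of_nonneg univ hq (fun _ => 1) _ (fun _ => zero_le_one) hg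
  simp only [one_mul, sum_const, card_univ, nsmul_eq_mul, mul_one, inv_div] at holder
  calc ∑ j, ∏ i ∈ s, f i j
      ≤ (Fintype.card κ : ℝ) ^ (1 - #s / p) * (∑ j, (∏ i ∈ s, f i j) ^ (p / #s)) ^ (#s / p) :=
        holder
    _ ≤ (Fintype.card κ : ℝ) ^ (1 - #s / p) * 1 := by
        gcongr
        exact Real.rpow_le_one (sum_nonneg fun j _ => Real.rpow_nonneg (hg j) _)
          (sum_prod_rpow_div_card_le_one p hs hf hf1) (div_nonneg hs'.le (hs'.le.trans hsp))
    _ = _ := mul_one _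

end Holder

namespace PiLp

variable {ι κ β : Type*} [Fintype κ] [SeminormedAddCommGroup β] {p : ℝ≥0∞}

theorem sum_norm_rpow_eq (hp : 0 < p.toReal) (x : PiLp p (fun _ : κ => β)) :
    ∑ j, ‖x j‖ ^ p.toReal = ‖x‖ ^ p.toReal := by
  rw [norm_eq_sum hp, ← Real.rpow_mul (sum_nonneg fun j _ => by positivity),
    one_div_mul_cancel hp.ne', Real.rpow_one]

theorem sum_prod_norm_le [Fact (1 ≤ p)] {s : Finset ι} (hs : 0 < #s) (hsp : #s ≤ p.toReal)
    (x : ι → PiLp p (fun _ : κ => β)) :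
    ∑ j, ∏ i ∈ s, ‖x i j‖ ≤ (Fintype.card κ : ℝ) ^ (1 - #s / p.toReal) * ∏ i ∈ s, ‖x i‖ := by
  by_cases! hzero : ∃ i ∈ s, ‖x i‖ = 0
  · obtain ⟨i, hi, hxi⟩ := hzero
    have hcoord : ∀ j, ‖x i j‖ = 0 := fun j =>
      le_antisymm (hxi ▸ norm_apply_le (x i) j) (norm_nonneg _)
    rw [sum_eq_zero fun j _ => prod_eq_zero hi (hcoord j), prod_eq_zero hi hxi, mul_zero]
  have hp : 0 < p.toReal := lt_of_lt_of_le (by exact_mod_cast hs) hsp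
  have hpos : ∀ i ∈ s, 0 < ‖x i‖ := fun i hi => (norm_nonneg _).lt_of_ne' (hzero i hi)
  have hunit : ∀ i ∈ s, ∑ j, (‖x i j‖ / ‖x i‖) ^ p.toReal = 1 := fun i hi => by
    simp_rw [Real.div_rpow (norm_nonneg _) (norm_nonneg _), ← sum_div, sum_norm_rpow_eq hp]
    exact div_self (Real.rpow_pos_of_pos (hpos i hi) _).ne'
  have hholder := sum_prod_le_card_rpow_of_sum_rpow_eq_one hs hsp (fun i _ j => by positivity) hunit
  calc ∑ j, ∏ i ∈ s, ‖x i j‖ = (∏ i ∈ s, ‖x i‖) * ∑ j, ∏ i ∈ s, ‖x i j‖ / ‖x i‖ := by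
        simp_rw [mul_sum, ← prod_mul_distrib]
        exact sum_congr rfl fun j _ => prod_congr rfl fun i hi => by
          rw [mul_div_cancel₀ _ (hpos i hi).ne']
    _ ≤ _ := by
        rw [mul_comm]
        gcongr

end PiLp

section TruncatedDiagonalForm

variable {ι κ : Type*} [Fintype ι] [DecidableEq ι] [Fintype κ] {p : ℝ≥0∞} [Fact (1 ≤ p)]

theorem ContinuousMultilinearMap.opNorm_le_of_apply_eq_prod_mul_sum_prod {𝕂 : Type*}
    [NontriviallyNormedField 𝕂]
    {T : ContinuousMultilinearMap 𝕂 (fun _ : ι => PiLp p (fun _ : κ => 𝕂)) 𝕂} {a : κ}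
    {s : Finset ι} (hT : ∀ x, T x = (∏ i ∈ sᶜ, x i a) * ∑ j, ∏ i ∈ s, x i j)
    (hs : 0 < #s) (hsp : #s ≤ p.toReal) :
    ‖T‖ ≤ (Fintype.card κ : ℝ) ^ (1 - #s / p.toReal) := by
  refine T.opNorm_le_bound (by positivity) fun x => ?_
  calc ‖T x‖ ≤ (∏ i ∈ sᶜ, ‖x i‖) * ∑ j, ∏ i ∈ s, ‖x i j‖ := by
        rw [hT, norm_mul, norm_prod]
        gcongr
        · exact PiLp.norm_apply_le _ _
        · exact (norm_sum_le _ _).trans_eq (sum_congr rfl fun j _ => norm_prod _ _)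
    _ ≤ (∏ i ∈ sᶜ, ‖x i‖) * ((Fintype.card κ : ℝ) ^ (1 - #s / p.toReal) * ∏ i ∈ s, ‖x i‖) := by
        gcongr
        exact PiLp.sum_prod_norm_le hs hsp x
    _ = (Fintype.card κ : ℝ) ^ (1 - #s / p.toReal) * ∏ i, ‖x i‖ := by
        rw [← prod_compl_mul_prod s]
        ring

theorem ContinuousMultilinearMap.le_opNorm_of_apply_eq_prod_mul_sum_prod {𝕂 : Type*} [RCLike 𝕂]
    {T : ContinuousMultilinearMap 𝕂 (fun _ : ι => PiLp p (fun _ : κ => 𝕂)) 𝕂} {a : κ}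
    {s : Finset ι} (hT : ∀ x, T x = (∏ i ∈ sᶜ, x i a) * ∑ j, ∏ i ∈ s, x i j) :
    (Fintype.card κ : ℝ) ^ (1 - #s / p.toReal) ≤ ‖T‖ := by
  classical
  have : Nonempty κ := ⟨a⟩
  have hκ : (0 : ℝ) < Fintype.card κ := by exact_mod_cast Fintype.card_pos
  let y : ι → PiLp p (fun _ : κ => 𝕂) := fun i =>
    if i ∈ s then WithLp.toLp p (Function.const κ 1) else PiLp.single p a 1
  have hya : ∀ i, y i a = 1 := fun i => by by_cases hi : i ∈ s <;> simp [y, hi]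
  have hyj : ∀ i ∈ s, ∀ j, y i j = 1 := fun i hi j => by simp [y, hi]
  have hTy : T y = Fintype.card κ := by
    rw [hT, prod_congr rfl fun i _ => hya i, prod_const_one, one_mul,
      sum_congr rfl fun j _ => prod_congr rfl fun i hi => hyj i hi j]
    simp
  have hny : ∏ i, ‖y i‖ = (Fintype.card κ : ℝ) ^ (#s / p.toReal) := by
    have hsc : ∀ i ∈ sᶜ, ‖y i‖ = 1 := fun i hi => by
      simp [y, mem_compl.1 hi]
    have hsd : ∀ i ∈ s, ‖y i‖ = (Fintype.card κ : ℝ) ^ (1 / p.toReal) := fun i hi => by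
      rw [show y i = _ from if_pos hi, PiLp.norm_toLp_const', norm_one, mul_one]
      simp
    rw [← prod_compl_mul_prod s, prod_congr rfl hsc, prod_congr rfl hsd, prod_const_one, one_mul,
      prod_const, ← Real.rpow_natCast, ← Real.rpow_mul hκ.le, one_div_mul_eq_div]
  have hle := T.le_opNorm y
  rw [hTy, RCLike.norm_natCast, hny] at hle
  rw [Real.rpow_sub hκ, Real.rpow_one, div_le_iff₀ (by positivity)]
  exact hle

end TruncatedDiagonalForm

/-- **Norms of the truncated diagonal forms.**
For `m ≥ 2`, `n ≥ 1` and `0 ≤ k ≤ m−1`, the `m`-linear form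
`T(x^{(1)},…,x^{(m)}) = x_1^{(1)} ⋯ x_1^{(k)} · Σ_{j=1}^n x_j^{(k+1)} ⋯ x_j^{(m)}`
on `ℓ_m^n × ⋯ × ℓ_m^n` has norm `‖T‖ = n^{k/m}`.  (In particular, for `k = 0` the
diagonal form has norm `1`.) -/
theorem norm_truncated_diagonal_form (𝕂 : Type*) [RCLike 𝕂] (m n k : ℕ) (hm : 2 ≤ m)
    (hn : 0 < n) (hk : k ≤ m - 1) :
    haveI : Fact ((1 : ℝ≥0∞) ≤ (m : ℝ≥0∞)) := ⟨by exact_mod_cast (by omega : 1 ≤ m)⟩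
    ∀ T : ContinuousMultilinearMap 𝕂
        (fun _ : Fin m => PiLp (m : ℝ≥0∞) (fun _ : Fin n => 𝕂)) 𝕂,
      (∀ x : Fin m → PiLp (m : ℝ≥0∞) (fun _ : Fin n => 𝕂),
          T x = (∏ i ∈ Finset.univ.filter (fun i : Fin m => (i : ℕ) < k), x i ⟨0, hn⟩) *
            ∑ j : Fin n, ∏ i ∈ Finset.univ.filter (fun i : Fin m => ¬ (i : ℕ) < k), x i j) →
        ‖T‖ = (n : ℝ) ^ ((k : ℝ) / (m : ℝ)) := by
  have : Fact ((1 : ℝ≥0∞) ≤ m) := ⟨by exact_mod_cast (by omega : 1 ≤ m)⟩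
  intro T hT
  have hcard : #{i : Fin m | ¬ (i : ℕ) < k} = m - k := by
    have := card_filter_add_card_filter_not (s := univ) (fun i : Fin m => (i : ℕ) < k)
    rw [Fin.card_filter_val_lt, card_univ, Fintype.card_fin] at this
    omega
  set s := univ.filter fun i : Fin m => ¬ (i : ℕ) < k
  have hT' : ∀ x, T x = (∏ i ∈ sᶜ, x i ⟨0, hn⟩) * ∑ j, ∏ i ∈ s, x i j := by
    simpa only [s, compl_filter, not_not] using hT
  have hexp : 1 - (#s : ℝ) / (m : ℝ≥0∞).toReal = k / m := by
    rw [hcard, ENNReal.toReal_natCast, Nat.cast_sub (by omega)]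
    field_simp
    ring
  have hsp : (#s : ℝ) ≤ (m : ℝ≥0∞).toReal := by
    rw [hcard, ENNReal.toReal_natCast]
    exact_mod_cast Nat.sub_le m k
  calc ‖T‖ = (Fintype.card (Fin n) : ℝ) ^ (1 - (#s : ℝ) / (m : ℝ≥0∞).toReal) :=
        le_antisymm (T.opNorm_le_of_apply_eq_prod_mul_sum_prod hT' (by omega) hsp)
          (T.le_opNorm_of_apply_eq_prod_mul_sum_prod hT')
    _ = (n : ℝ) ^ ((k : ℝ) / (m : ℝ)) := by rw [Fintype.card_fin, hexp]
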